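/- arXiv:1803.01410 — 3 statements merged into one kernel-verified Lean document; each statement's English description precedes it below -/
import Mathlib

section
/- Let φ solve φ'(r) = (1+φ²(r))(c - (n-1)(ξ'(r)/ξ(r)) φ(r)) on (R, ∞) with c > 0 and ξ', ξ > 0. If there exist ε > 0 and r₀ > R such that φ(r) < (1-ε)(c/(n-1)) ξ(r)/ξ'(r) for all r > r₀, then φ'(r) > cε(1+φ²(r)) for all r > r₀, and hence cε(r - r_*) < arctan φ(r) - arctan φ(r_*) for r > r_* > r₀; consequently no such solution can be defined on all of (r₀, ∞). Therefore for every ε > 0 and r₀ > R there exists r₁ > r₀ with φ(r₁) ≥ (1-ε)(c/(n-1)) ξ(r₁)/ξ'(r₁). -/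
/-!
Below the threshold `(1 - ε)(c/(n-1)) ξ/ξ'` the right-hand side of the equation is at least
`cε(1 + φ²)`, so `arctan ∘ φ` grows with slope at least `cε`. As `arctan` takes values in
`(-π/2, π/2)`, this cannot go on over an interval of length `π/(cε)`.
-/

open Real Set

lemma mul_lt_sub_of_lt_mul_div {m A B c ε φ : ℝ} (hm : 0 < m) (hA : 0 < A) (hB : 0 < B)
    (h : φ < (1 - ε) * (c / m) * (B / A)) : c * ε < c - m * (A / B) * φ := by
  have hmAB : 0 < m * (A / B) := by positivity
  have hscaled := mul_lt_mul_of_pos_left h hmAB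
  have hcancel : m * (A / B) * ((1 - ε) * (c / m) * (B / A)) = (1 - ε) * c := by
    field_simp
  linarith

lemma mul_sub_lt_arctan_sub_of_hasDerivAt {φ φ' : ℝ → ℝ} {k r₀ : ℝ}
    (hφ : ∀ x > r₀, HasDerivAt φ (φ' x) x) (hgrowth : ∀ x > r₀, k * (1 + φ x ^ 2) < φ' x)
    {x y : ℝ} (hx : r₀ < x) (hxy : x < y) :
    k * (y - x) < arctan (φ y) - arctan (φ x) := by
  have harctan : ∀ z > r₀, HasDerivAt (fun t => arctan (φ t)) (1 / (1 + φ z ^ 2) * φ' z) z :=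
    fun z hz => (hφ z hz).arctan
  refine (convex_Ioi r₀).mul_sub_lt_image_sub_of_lt_deriv
    (fun z hz => (harctan z hz).continuousAt.continuousWithinAt)
    (fun z hz => (harctan z (interior_subset hz)).differentiableAt.differentiableWithinAt)
    (fun z hz => ?_) x hx y (hx.trans hxy) hxy
  rw [interior_Ioi] at hz
  have hpos : 0 < 1 + φ z ^ 2 := by positivity
  rw [(harctan z hz).deriv, one_div_mul_eq_div, lt_div_iff₀ hpos]
  exact hgrowth z hz

lemma nonpos_of_forall_mul_sub_lt_arctan_sub {φ : ℝ → ℝ} {k r₀ : ℝ}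
    (h : ∀ x y : ℝ, r₀ < x → x < y → k * (y - x) < arctan (φ y) - arctan (φ x)) : k ≤ 0 := by
  by_contra! hk
  have hgap := h (r₀ + 1) (r₀ + 1 + π / k) (by linarith) (by linarith [div_pos pi_pos hk])
  rw [add_sub_cancel_left, mul_div_cancel₀ _ hk.ne'] at hgap
  linarith [arctan_lt_pi_div_two (φ (r₀ + 1 + π / k)), neg_pi_div_two_lt_arctan (φ (r₀ + 1))]

theorem stmt_9_general (n : ℕ) (hn : 2 ≤ n) (c R : ℝ) (hc : 0 < c)
    (ξ φ : ℝ → ℝ)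
    (hξ : ∀ r > R, 0 < ξ r) (hξ' : ∀ r > R, 0 < deriv ξ r)
    (hφ : ∀ r > R,
      HasDerivAt φ ((1 + φ r ^ 2) * (c - (n - 1 : ℝ) * (deriv ξ r / ξ r) * φ r)) r) :
    (∀ ε > (0:ℝ), ∀ r₀ > R,
      (∀ r > r₀, φ r < (1 - ε) * (c / (n - 1 : ℝ)) * (ξ r / deriv ξ r)) →
        (∀ r > r₀, deriv φ r > c * ε * (1 + φ r ^ 2)) ∧
        (∀ rs r : ℝ, r₀ < rs → rs < r →
          c * ε * (r - rs) < Real.arctan (φ r) - Real.arctan (φ rs))) ∧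
    (∀ ε > (0:ℝ), ∀ r₀ > R, ∃ r₁ > r₀,
      (1 - ε) * (c / (n - 1 : ℝ)) * (ξ r₁ / deriv ξ r₁) ≤ φ r₁) := by
  have hn1 : (0 : ℝ) < n - 1 := by
    have : (2 : ℝ) ≤ n := by exact_mod_cast hn
    linarith
  have growth : ∀ ε > (0:ℝ), ∀ r₀ > R,
      (∀ r > r₀, φ r < (1 - ε) * (c / (n - 1 : ℝ)) * (ξ r / deriv ξ r)) →
        (∀ r > r₀, deriv φ r > c * ε * (1 + φ r ^ 2)) ∧
        (∀ rs r : ℝ, r₀ < rs → rs < r →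
          c * ε * (r - rs) < Real.arctan (φ r) - Real.arctan (φ rs)) := by
    intro ε _ r₀ hr₀ hbound
    have hφ₀ : ∀ r > r₀, HasDerivAt φ
        ((1 + φ r ^ 2) * (c - (n - 1 : ℝ) * (deriv ξ r / ξ r) * φ r)) r :=
      fun r hr => hφ r (hr₀.trans hr)
    have hgrowth : ∀ r > r₀, c * ε * (1 + φ r ^ 2) <
        (1 + φ r ^ 2) * (c - (n - 1 : ℝ) * (deriv ξ r / ξ r) * φ r) := by
      intro r hr
      rw [mul_comm]
      exact mul_lt_mul_of_pos_left (mul_lt_sub_of_lt_mul_div hn1 (hξ' r (hr₀.trans hr))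
        (hξ r (hr₀.trans hr)) (hbound r hr)) (by positivity)
    exact ⟨fun r hr => (hφ₀ r hr).deriv ▸ hgrowth r hr,
      fun rs r hrs hr => mul_sub_lt_arctan_sub_of_hasDerivAt hφ₀ hgrowth hrs hr⟩
  refine ⟨growth, fun ε hε r₀ hr₀ => ?_⟩
  by_contra! hbound
  exact (mul_pos hc hε).not_ge
    (nonpos_of_forall_mul_sub_lt_arctan_sub (growth ε hε r₀ hr₀ hbound).2)

/-- Let φ solve φ' = (1+φ²)(c - (n-1)(ξ'/ξ)φ) on (R,∞) with c > 0 and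
ξ, ξ' > 0. If φ(r) < (1-ε)(c/(n-1))ξ/ξ' for all r > r₀, then φ' > cε(1+φ²) there,
hence cε(r - r_*) < arctan φ(r) - arctan φ(r_*); consequently (since φ is defined on
all of (r₀,∞) and arctan is bounded) for every ε > 0 and r₀ > R there is r₁ > r₀ with
φ(r₁) ≥ (1-ε)(c/(n-1))ξ(r₁)/ξ'(r₁). -/
theorem stmt_9 (n : ℕ) (hn : 2 ≤ n) (c R : ℝ) (hc : 0 < c) (hR : 0 ≤ R)
    (ξ φ : ℝ → ℝ)
    (hξ : ∀ r > R, 0 < ξ r) (hξ' : ∀ r > R, 0 < deriv ξ r)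
    (hφ : ∀ r > R,
      HasDerivAt φ ((1 + φ r ^ 2) * (c - (n - 1 : ℝ) * (deriv ξ r / ξ r) * φ r)) r) :
    (∀ ε > (0:ℝ), ∀ r₀ > R,
      (∀ r > r₀, φ r < (1 - ε) * (c / (n - 1 : ℝ)) * (ξ r / deriv ξ r)) →
        (∀ r > r₀, deriv φ r > c * ε * (1 + φ r ^ 2)) ∧
        (∀ rs r : ℝ, r₀ < rs → rs < r →
          c * ε * (r - rs) < Real.arctan (φ r) - Real.arctan (φ rs))) ∧
    (∀ ε > (0:ℝ), ∀ r₀ > R, ∃ r₁ > r₀,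
      (1 - ε) * (c / (n - 1 : ℝ)) * (ξ r₁ / deriv ξ r₁) ≤ φ r₁) :=
  stmt_9_general n hn c R hc ξ φ hξ hξ' hφ
end

section
/- For a wing-like rotationally symmetric translating soliton with c > 0, neck radius ε > 0 attained at r(0) = ε with φ(0) = -π/2, and minimum height at radius r₀ where φ(r₀) = 0: if r ↦ ξ(r)/ξ'(r) is non-decreasing, then (1/(n-1)) (ξ(ε)/ξ'(ε)) (π/2 - c(r₀-ε)) ≤ t(ε) - t(r₀) ≤ (1/(n-1)) (ξ(r₀)/ξ'(r₀)) (π/2 - c(r₀-ε)). In particular, since t(ε) ≥ t(r₀), the neck satisfies r₀ - ε ≤ π/(2c). -/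
/-!
Writing `-t' = w · (φ' - c)` with the weight `w = (1/(n-1)) · ξ/ξ'`, the descent `t' ≤ 0`
forces `φ' ≥ c`, so `φ - c r` is non-decreasing. The height drop `t(ε) - t(r₀)` is then the
increment of `φ - c r`, which is `π/2 - c(r₀ - ε) ≥ 0`, weighted by `w`; since `w` is
non-decreasing it lies between its values at the two endpoints.
-/

open Set

lemma sub_le_sub_of_hasDerivAt_le {f g f' g' : ℝ → ℝ} {a b : ℝ} (hab : a ≤ b)
    (hf : ∀ x ∈ Icc a b, HasDerivAt f (f' x) x) (hg : ∀ x ∈ Icc a b, HasDerivAt g (g' x) x)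
    (hle : ∀ x ∈ Icc a b, f' x ≤ g' x) : f b - f a ≤ g b - g a := by
  have hmono : MonotoneOn (fun x => g x - f x) (Icc a b) :=
    monotoneOn_of_hasDerivWithinAt_nonneg (convex_Icc a b)
      (fun x hx => ((hg x hx).sub (hf x hx)).continuousAt.continuousWithinAt)
      (fun x hx => ((hg x (interior_subset hx)).sub (hf x (interior_subset hx))).hasDerivWithinAt)
      (fun x hx => sub_nonneg.2 (hle x (interior_subset hx)))
  have := hmono (left_mem_Icc.2 hab) (right_mem_Icc.2 hab) hab
  linarith

lemma mul_sub_le_sub_of_le_weight {u v w v' : ℝ → ℝ} {a b m : ℝ} (hab : a ≤ b)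
    (hu : ∀ x ∈ Icc a b, HasDerivAt u (w x * v' x) x)
    (hv : ∀ x ∈ Icc a b, HasDerivAt v (v' x) x) (hv' : ∀ x ∈ Icc a b, 0 ≤ v' x)
    (hm : ∀ x ∈ Icc a b, m ≤ w x) : m * (v b - v a) ≤ u b - u a := by
  have := sub_le_sub_of_hasDerivAt_le hab (fun x hx => (hv x hx).const_mul m) hu
    fun x hx => mul_le_mul_of_nonneg_right (hm x hx) (hv' x hx)
  linarith

lemma sub_le_mul_sub_of_weight_le {u v w v' : ℝ → ℝ} {a b M : ℝ} (hab : a ≤ b)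
    (hu : ∀ x ∈ Icc a b, HasDerivAt u (w x * v' x) x)
    (hv : ∀ x ∈ Icc a b, HasDerivAt v (v' x) x) (hv' : ∀ x ∈ Icc a b, 0 ≤ v' x)
    (hM : ∀ x ∈ Icc a b, w x ≤ M) : u b - u a ≤ M * (v b - v a) := by
  have := sub_le_sub_of_hasDerivAt_le hab hu (fun x hx => (hv x hx).const_mul M)
    fun x hx => mul_le_mul_of_nonneg_right (hM x hx) (hv' x hx)
  linarith

theorem stmt_12_general (n : ℕ) (hn : 2 ≤ n) (c ε r₀ : ℝ) (hc : 0 < c)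
    (hεr : ε < r₀)
    (ξ t φ : ℝ → ℝ)
    (hgmono : MonotoneOn (fun r => ξ r / deriv ξ r) (Set.Icc ε r₀))
    (hgpos : ∀ r ∈ Set.Icc ε r₀, 0 < ξ r / deriv ξ r)
    (hφε : φ ε = -(Real.pi / 2)) (hφr₀ : φ r₀ = 0)
    (hφdiff : ∀ r ∈ Set.Icc ε r₀, DifferentiableAt ℝ φ r)
    -- t'(r) = (1/(n-1))(ξ/ξ')(c - φ'(r)) on the arc from the neck to the lowest point
    (ht : ∀ r ∈ Set.Icc ε r₀,
      HasDerivAt t ((1 / (n - 1 : ℝ)) * (ξ r / deriv ξ r) * (c - deriv φ r)) r)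
    -- ṫ = sin φ ≤ 0 on this arc
    (hmono : ∀ r ∈ Set.Icc ε r₀, deriv t r ≤ 0) :
    (1 / (n - 1 : ℝ)) * (ξ ε / deriv ξ ε) * (Real.pi / 2 - c * (r₀ - ε)) ≤ t ε - t r₀ ∧
    t ε - t r₀ ≤ (1 / (n - 1 : ℝ)) * (ξ r₀ / deriv ξ r₀) * (Real.pi / 2 - c * (r₀ - ε)) ∧
    r₀ - ε ≤ Real.pi / (2 * c) := by
  set K : ℝ := 1 / (n - 1 : ℝ)
  have hK : 0 < K := one_div_pos.2 (by have : (2 : ℝ) ≤ n := (by exact_mod_cast hn); linarith)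
  have hε_mem : ε ∈ Icc ε r₀ := left_mem_Icc.2 hεr.le
  have hr₀_mem : r₀ ∈ Icc ε r₀ := right_mem_Icc.2 hεr.le
  have hdescent : ∀ r ∈ Icc ε r₀,
      HasDerivAt (fun r => -t r) (K * (ξ r / deriv ξ r) * (deriv φ r - c)) r :=
    fun r hr => (ht r hr).neg.congr_deriv (by ring)
  have hangle : ∀ r ∈ Icc ε r₀, HasDerivAt (fun r => φ r - c * r) (deriv φ r - c) r :=
    fun r hr => ((hφdiff r hr).hasDerivAt.sub ((hasDerivAt_id r).const_mul c)).congr_deriv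
      (by simp)
  have hslope : ∀ r ∈ Icc ε r₀, 0 ≤ deriv φ r - c := by
    intro r hr
    have hdt := hmono r hr
    rw [(ht r hr).deriv] at hdt
    nlinarith [mul_pos hK (hgpos r hr)]
  have hΔ : (φ r₀ - c * r₀) - (φ ε - c * ε) = Real.pi / 2 - c * (r₀ - ε) := by
    rw [hφε, hφr₀]; ring
  have hlow := mul_sub_le_sub_of_le_weight hεr.le hdescent hangle hslope
    fun r hr => mul_le_mul_of_nonneg_left (hgmono hε_mem hr hr.1) hK.le
  have hhigh := sub_le_mul_sub_of_weight_le hεr.le hdescent hangle hslope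
    fun r hr => mul_le_mul_of_nonneg_left (hgmono hr hr₀_mem hr.2) hK.le
  have hneck := sub_le_sub_of_hasDerivAt_le hεr.le (fun r _ => hasDerivAt_const r 0) hangle hslope
  rw [hΔ] at hlow hhigh hneck
  refine ⟨by linarith, by linarith, ?_⟩
  rw [le_div_iff₀ (by positivity)]
  linarith

/-- For a wing-like rotationally symmetric translating soliton with
c > 0, neck radius ε (where φ(ε) = -π/2) and minimum height at r₀ (where φ(r₀) = 0),
with t'(r) = (1/(n-1))(ξ/ξ')(c - φ'(r)) and ξ/ξ' non-decreasing, one has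
(1/(n-1))(ξ(ε)/ξ'(ε))(π/2 - c(r₀-ε)) ≤ t(ε) - t(r₀)
  ≤ (1/(n-1))(ξ(r₀)/ξ'(r₀))(π/2 - c(r₀-ε)),
and since t(ε) ≥ t(r₀), the neck satisfies r₀ - ε ≤ π/(2c). -/
theorem stmt_12 (n : ℕ) (hn : 2 ≤ n) (c ε r₀ : ℝ) (hc : 0 < c)
    (hε : 0 < ε) (hεr : ε < r₀)
    (ξ t φ : ℝ → ℝ)
    (hgmono : MonotoneOn (fun r => ξ r / deriv ξ r) (Set.Icc ε r₀))
    (hgpos : ∀ r ∈ Set.Icc ε r₀, 0 < ξ r / deriv ξ r)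
    (hφε : φ ε = -(Real.pi / 2)) (hφr₀ : φ r₀ = 0)
    (hφdiff : ∀ r ∈ Set.Icc ε r₀, DifferentiableAt ℝ φ r)
    -- t'(r) = (1/(n-1))(ξ/ξ')(c - φ'(r)) on the arc from the neck to the lowest point
    (ht : ∀ r ∈ Set.Icc ε r₀,
      HasDerivAt t ((1 / (n - 1 : ℝ)) * (ξ r / deriv ξ r) * (c - deriv φ r)) r)
    -- ṫ = sin φ ≤ 0 on this arc
    (hmono : ∀ r ∈ Set.Icc ε r₀, deriv t r ≤ 0) :
    (1 / (n - 1 : ℝ)) * (ξ ε / deriv ξ ε) * (Real.pi / 2 - c * (r₀ - ε)) ≤ t ε - t r₀ ∧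
    t ε - t r₀ ≤ (1 / (n - 1 : ℝ)) * (ξ r₀ / deriv ξ r₀) * (Real.pi / 2 - c * (r₀ - ε)) ∧
    r₀ - ε ≤ Real.pi / (2 * c) :=
  stmt_12_general n hn c ε r₀ hc hεr ξ t φ hgmono hgpos hφε hφr₀ hφdiff ht hmono
end

section
/- If r₀ = r₀(ε) denotes the radius where the wing-like soliton M_ε attains its minimum height and ξ(r)/ξ'(r) → 0 as r → 0, then lim_{ε→0} (t(ε) - t(r₀)) = 0 and lim sup_{ε→+∞} (t(ε) - t(r₀)) < +∞. -/
/-- Let r₀(ε) be the radius where the wing-like soliton M_ε attains its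
minimum height and T(ε) = t(ε) - t(r₀(ε)) ≥ 0 the height of the neck above the lowest
point, satisfying the bounds
(1/(n-1))(ξ(ε)/ξ'(ε))(π/2 - c(r₀-ε)) ≤ T(ε) ≤ (1/(n-1))(ξ(r₀)/ξ'(r₀))(π/2 - c(r₀-ε))
and r₀(ε) - ε ≤ π/(2c), with ξ/ξ' → 0 at 0⁺, r₀(ε) → 0 as ε → 0⁺ and ξ/ξ' bounded.
Then lim_{ε→0⁺} T(ε) = 0 and T stays bounded as ε → +∞. -/
theorem stmt_13 (n : ℕ) (hn : 2 ≤ n) (c C : ℝ) (hc : 0 < c)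
    (ξ r₀ T : ℝ → ℝ)
    (hg0 : Filter.Tendsto (fun r => ξ r / deriv ξ r) (nhdsWithin 0 (Set.Ioi 0)) (nhds 0))
    (hgbd : ∀ r > (0:ℝ), 0 ≤ ξ r / deriv ξ r ∧ ξ r / deriv ξ r ≤ C)
    (hr₀ : ∀ ε > (0:ℝ), ε < r₀ ε)
    (hr₀0 : Filter.Tendsto r₀ (nhdsWithin 0 (Set.Ioi 0)) (nhdsWithin 0 (Set.Ioi 0)))
    (hTnn : ∀ ε > (0:ℝ), 0 ≤ T ε)
    (hneck : ∀ ε > (0:ℝ), r₀ ε - ε ≤ Real.pi / (2 * c))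
    (hbnd : ∀ ε > (0:ℝ),
      (1 / (n - 1 : ℝ)) * (ξ ε / deriv ξ ε) * (Real.pi / 2 - c * (r₀ ε - ε)) ≤ T ε ∧
      T ε ≤ (1 / (n - 1 : ℝ)) * (ξ (r₀ ε) / deriv ξ (r₀ ε)) * (Real.pi / 2 - c * (r₀ ε - ε))) :
    Filter.Tendsto T (nhdsWithin 0 (Set.Ioi 0)) (nhds 0) ∧
    ∃ C' : ℝ, ∀ ε > (0:ℝ), T ε ≤ C' := by
  have hn1 : (0:ℝ) < (n:ℝ) - 1 := by
    have : (2:ℝ) ≤ (n:ℝ) := by exact_mod_cast hn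
    linarith
  have key : ∀ ε > (0:ℝ),
      T ε ≤ (1 / (n - 1 : ℝ)) * (ξ (r₀ ε) / deriv ξ (r₀ ε)) * (Real.pi / 2) := by
    intro ε hε
    have h1 := (hbnd ε hε).2
    have hr := hr₀ ε hε
    have hg := (hgbd (r₀ ε) (lt_trans hε hr)).1
    have hinv : (0:ℝ) ≤ 1 / ((n:ℝ) - 1) := by positivity
    have hsub : Real.pi / 2 - c * (r₀ ε - ε) ≤ Real.pi / 2 := by nlinarith
    calc T ε ≤ _ := h1
      _ ≤ _ := by
        apply mul_le_mul_of_nonneg_left hsub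
        positivity
  constructor
  · have hu : Filter.Tendsto
        (fun ε => (1 / (n - 1 : ℝ)) * (ξ (r₀ ε) / deriv ξ (r₀ ε)) * (Real.pi / 2))
        (nhdsWithin 0 (Set.Ioi 0)) (nhds 0) := by
      have hcomp := hg0.comp hr₀0
      have := (hcomp.const_mul (1 / (n - 1 : ℝ))).mul_const (Real.pi / 2)
      simpa using this
    refine tendsto_of_tendsto_of_tendsto_of_le_of_le' tendsto_const_nhds hu ?_ ?_
    · filter_upwards [self_mem_nhdsWithin] with ε hε
      exact hTnn ε hε
    · filter_upwards [self_mem_nhdsWithin] with ε hε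
      exact key ε hε
  · refine ⟨(1 / (n - 1 : ℝ)) * C * (Real.pi / 2), fun ε hε => ?_⟩
    have hg := hgbd (r₀ ε) (lt_trans hε (hr₀ ε hε))
    have hpi : (0:ℝ) ≤ Real.pi / 2 := by positivity
    have hinv : (0:ℝ) ≤ 1 / ((n:ℝ) - 1) := by positivity
    calc T ε ≤ _ := key ε hε
      _ ≤ _ := by
        apply mul_le_mul_of_nonneg_right _ hpi
        exact mul_le_mul_of_nonneg_left hg.2 hinv
end
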